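/- For the Euler-kernel approximation problem under the absolute error criterion, the problem is strongly polynomially tractable for every nondecreasing sequence (r_k) of nonnegative integers, and the exponent of SPT equals max{ξ_0/(r̄+1), 1/(r_1+1)}, where r̄ := lim_{k→∞} r_k ∈ [0,∞] (with ξ_0/(r̄+1) := 0 when r̄ = ∞) and ξ_0 is the unique number in (1,2) satisfying ∑_{j=1}^∞ (π(j-1/2))^{-ξ_0} = 1. -/

import Mathlib

open Filter Real Set

/-- Information complexity: the number of multi-indices `(j₁,…,j_d) ∈ ℕ^d`
(here 0-indexed, so `Λ k j` stands for `λ(k+1, j+1)`) whose eigenvalue product exceeds `ε²`. -/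
noncomputable def infoCount (Λ : ℕ → ℕ → ℝ) (d : ℕ) (ε : ℝ) : ℕ :=
  Nat.card {j : Fin d → ℕ | ε ^ 2 < ∏ k : Fin d, Λ k.val (j k)}

/-- Strong polynomial tractability. -/
def IsSPT (Λ : ℕ → ℕ → ℝ) : Prop :=
  ∃ C p : ℝ, 0 ≤ C ∧ 0 ≤ p ∧ ∀ d : ℕ, 1 ≤ d → ∀ ε : ℝ, ε ∈ Set.Ioo (0 : ℝ) 1 →
    (infoCount Λ d ε : ℝ) ≤ C * ε ^ (-p)

/-- The exponent `p*` of strong polynomial tractability. -/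
noncomputable def sptExponent (Λ : ℕ → ℕ → ℝ) : ℝ :=
  sInf {p : ℝ | 0 ≤ p ∧ ∃ C : ℝ, 0 ≤ C ∧ ∀ d : ℕ, 1 ≤ d → ∀ ε : ℝ, ε ∈ Set.Ioo (0 : ℝ) 1 →
    (infoCount Λ d ε : ℝ) ≤ C * ε ^ (-p)}

/-- Polynomial tractability. -/
def IsPT (Λ : ℕ → ℕ → ℝ) : Prop :=
  ∃ C p q : ℝ, 0 ≤ C ∧ 0 ≤ p ∧ 0 ≤ q ∧ ∀ d : ℕ, 1 ≤ d → ∀ ε : ℝ, ε ∈ Set.Ioo (0 : ℝ) 1 →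
    (infoCount Λ d ε : ℝ) ≤ C * (d : ℝ) ^ q * ε ^ (-p)

/-- Quasi-polynomial tractability. -/
def IsQPT (Λ : ℕ → ℕ → ℝ) : Prop :=
  ∃ C t : ℝ, 0 < C ∧ 0 < t ∧ ∀ d : ℕ, 1 ≤ d → ∀ ε : ℝ, ε ∈ Set.Ioo (0 : ℝ) 1 →
    (infoCount Λ d ε : ℝ) ≤ C * Real.exp (t * (1 + Real.log d) * (1 + Real.log ε⁻¹))

/-- The exponent `t*` of quasi-polynomial tractability. -/
noncomputable def qptExponent (Λ : ℕ → ℕ → ℝ) : ℝ :=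
  sInf {t : ℝ | 0 < t ∧ ∃ C : ℝ, 0 < C ∧ ∀ d : ℕ, 1 ≤ d → ∀ ε : ℝ, ε ∈ Set.Ioo (0 : ℝ) 1 →
    (infoCount Λ d ε : ℝ) ≤ C * Real.exp (t * (1 + Real.log d) * (1 + Real.log ε⁻¹))}

/-- The filter describing `ε⁻¹ + d → ∞` over pairs `(ε, d)` with `ε ∈ (0,1)` and `d ≥ 1`. -/
noncomputable def wtFilter : Filter (ℝ × ℕ) :=
  (Filter.comap (fun p : ℝ × ℕ => p.1⁻¹ + (p.2 : ℝ)) Filter.atTop) ⊓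
    Filter.principal {p : ℝ × ℕ | p.1 ∈ Set.Ioo (0 : ℝ) 1 ∧ 1 ≤ p.2}

/-- `(s,t)`-weak tractability: `ln n(ε,d) / (ε^{-s} + d^t) → 0` as `ε⁻¹ + d → ∞`. -/
def IsWT (Λ : ℕ → ℕ → ℝ) (s t : ℝ) : Prop :=
  Filter.Tendsto
    (fun p : ℝ × ℕ => Real.log (infoCount Λ p.2 p.1) / (p.1 ^ (-s) + (p.2 : ℝ) ^ t))
    wtFilter (nhds 0)

/-- Uniform weak tractability. -/
def IsUWT (Λ : ℕ → ℕ → ℝ) : Prop := ∀ s t : ℝ, 0 < s → 0 < t → IsWT Λ s t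

/-- The problem suffers from the curse of dimensionality. -/
def SuffersCurse (Λ : ℕ → ℕ → ℝ) : Prop :=
  ∃ C ε₀ α : ℝ, 0 < C ∧ 0 < ε₀ ∧ 0 < α ∧ ∀ ε : ℝ, 0 < ε → ε ≤ ε₀ →
    {d : ℕ | C * (1 + α) ^ d ≤ (infoCount Λ d ε : ℝ)}.Infinite

/-- Condition (3) of Property (P) for a given `τ > 0`:
`H(k,τ) = ∑_{j≥2} (λ(k,j)/λ(k,2))^τ` is finite for each `k` and
`sup_k H(k,τ) = H(1,τ)` (equivalently `H(k,τ) ≤ H(1,τ)` for all `k`). -/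
def Cond3 (Λ : ℕ → ℕ → ℝ) (τ : ℝ) : Prop :=
  0 < τ ∧ (∀ k, Summable fun j : ℕ => (Λ k (j + 1) / Λ k 1) ^ τ) ∧
    ∀ k, (∑' j : ℕ, (Λ k (j + 1) / Λ k 1) ^ τ) ≤ ∑' j : ℕ, (Λ 0 (j + 1) / Λ 0 1) ^ τ

/-- `τ₀`: the infimum of all `τ` satisfying Condition (3). -/
noncomputable def tau0 (Λ : ℕ → ℕ → ℝ) : ℝ := sInf {τ : ℝ | Cond3 Λ τ}

/-- Property (P): each sequence `λ(k,·)` is nonincreasing and nonnegative with `λ(k,1) = 1`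
and `λ(k,2) > 0`, `h_k = λ(k,2)` is nonincreasing, and Condition (3) holds for some `τ > 0`. -/
structure PropertyP (Λ : ℕ → ℕ → ℝ) : Prop where
  nonneg : ∀ k j, 0 ≤ Λ k j
  anti : ∀ k, Antitone (Λ k)
  first : ∀ k, Λ k 0 = 1
  second_pos : ∀ k, 0 < Λ k 1
  h_anti : Antitone fun k => Λ k 1
  cond3 : ∃ τ : ℝ, Cond3 Λ τ

/-- Eigenvalues of the Euler-kernel problem (absolute error criterion):
`λ(k,j) = (π(j-1/2))^{-(2r_k+2)}` (0-indexed: `eulerAbsLam r k j = (π(j+1/2))^{-(2 r_{k+1}+2)}`). -/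
noncomputable def eulerAbsLam (r : ℕ → ℕ) (k j : ℕ) : ℝ :=
  ((Real.pi * ((j : ℝ) + 1 / 2)) ^ (2 * r k + 2))⁻¹

/-!
Write `a_j = π(j + 1/2)` and `G(x) = ∑_j a_j^{-x}`, so that `λ(k, j) = a_j^{-(2r_k+2)}` and
`∑_{j ∈ ℕ^d} (∏_k λ(k, j_k))^τ = ∏_k G((2r_k+2)τ)`.

Upper bound: by Markov's inequality with `τ = p/2`, `n(ε,d) ε^p ≤ ∏_k G((r_k+1)p)`. If
`p > 1/(r_1+1)` every factor is finite, and if `p > ξ₀/(r̄+1)` the factors are eventually at most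
`G(ξ₀) = 1`, so the product is bounded independently of `d`.

Lower bounds: for `d = 1` there are about `ε^{-1/(r_1+1)}/π` indices, so `p ≥ 1/(r_1+1)`. If
`r_k ≤ R` for all `k` and `n(ε,d) ≤ C ε^{-p}`, splitting `ℕ^d` into the dyadic shells
`2^{-m-1} < ∏_k λ(k, j_k) ≤ 2^{-m}` bounds `∏_k G((2r_k+2)τ)` uniformly in `d` for every `τ > p/2`;
but this product is at least `G((2R+2)τ)^d`, and `G((2R+2)τ) > 1` once `(2R+2)τ < ξ₀`. Hence
`p ≥ ξ₀/(R+1)`.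
-/

open scoped ENNReal Topology

theorem ENNReal.tsum_pi_prod {β : Type*} :
    ∀ (d : ℕ) (f : Fin d → β → ℝ≥0∞),
      ∑' j : Fin d → β, ∏ k, f k (j k) = ∏ k, ∑' b, f k b
  | 0, f => by simp [tsum_fintype]
  | d + 1, f => by
    rw [← (Fin.consEquiv fun _ => β).tsum_eq, Fin.prod_univ_succ, ← ENNReal.tsum_pi_prod d,
      ← ENNReal.tsum_mul_right]
    simp only [Fin.consEquiv, Equiv.coe_fn_mk, Fin.prod_univ_succ, Fin.cons_zero, Fin.cons_succ,
      ENNReal.tsum_prod', ENNReal.tsum_mul_left]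

theorem Set.encard_mul_le_tsum {ι : Type*} (S : Set ι) {g : ι → ℝ≥0∞} {c : ℝ≥0∞}
    (h : ∀ i ∈ S, c ≤ g i) : (S.encard : ℝ≥0∞) * c ≤ ∑' i, g i := by
  rw [← ENNReal.tsum_set_const]
  calc ∑' _ : S, c ≤ ∑' i : S, g i := ENNReal.tsum_le_tsum fun i => h i i.2
    _ ≤ ∑' i, g i := ENNReal.tsum_comp_le_tsum_of_injective Subtype.val_injective g

theorem inv_two_pow_rpow (n : ℕ) (x : ℝ) : ((2 : ℝ)⁻¹ ^ n) ^ x = ((2 : ℝ) ^ (-x)) ^ n := by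
  rw [inv_pow, Real.inv_rpow (by positivity), ← Real.rpow_natCast_mul (by norm_num),
    ← Real.rpow_mul_natCast (by norm_num), neg_mul, Real.rpow_neg (by norm_num), mul_comm]

theorem exists_inv_two_pow_lt_le {a : ℝ} (ha : a ∈ Ioc 0 1) :
    ∃ m : ℕ, (2 : ℝ)⁻¹ ^ (m + 1) < a ∧ a ≤ (2 : ℝ)⁻¹ ^ m := by
  obtain ⟨m, hle, hlt⟩ := exists_nat_pow_near (one_le_inv_iff₀.2 ha) one_lt_two
  refine ⟨m, ?_, ?_⟩
  · rwa [inv_pow, inv_lt_comm₀ (by positivity) ha.1]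
  · rwa [inv_pow, le_inv_comm₀ ha.1 (by positivity)]

theorem tsum_ofReal_rpow_le_of_encard_le {ι : Type*} {a : ι → ℝ} {C s σ : ℝ}
    (ha : ∀ i, a i ∈ Ioc 0 1) (hs : 0 ≤ s) (hsσ : s < σ)
    (h : ∀ t ∈ Ioo (0 : ℝ) 1, ({i | t < a i}.encard : ℝ≥0∞) ≤ ENNReal.ofReal (C * t ^ (-s))) :
    ∑' i, ENNReal.ofReal (a i ^ σ) ≤
      ENNReal.ofReal (C * 2 ^ s) * (1 - ENNReal.ofReal (2 ^ (s - σ)))⁻¹ := by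
  set T : ℕ → Set ι := fun m => {i | (2 : ℝ)⁻¹ ^ (m + 1) < a i}
  set c : ℕ → ℝ≥0∞ := fun m => ENNReal.ofReal (((2 : ℝ) ^ (-σ)) ^ m)
  have hbucket : ∀ i, ENNReal.ofReal (a i ^ σ) ≤ ∑' m, (T m).indicator (fun _ => c m) i := by
    intro i
    obtain ⟨m, hlt, hle⟩ := exists_inv_two_pow_lt_le (ha i)
    calc ENNReal.ofReal (a i ^ σ) ≤ c m := by
          simp only [c, ← inv_two_pow_rpow]
          exact ENNReal.ofReal_le_ofReal (Real.rpow_le_rpow (ha i).1.le hle (by linarith))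
      _ = (T m).indicator (fun _ => c m) i :=
          (Set.indicator_of_mem (s := T m) hlt fun _ => c m).symm
      _ ≤ _ := ENNReal.le_tsum m
  have hlevel : ∀ m, ((T m).encard : ℝ≥0∞) * c m ≤
      ENNReal.ofReal (C * 2 ^ s) * ENNReal.ofReal (2 ^ (s - σ)) ^ m := by
    intro m
    have ht : (2 : ℝ)⁻¹ ^ (m + 1) ∈ Ioo (0 : ℝ) 1 :=
      ⟨by positivity, pow_lt_one₀ (by norm_num) (by norm_num) (by omega)⟩
    calc ((T m).encard : ℝ≥0∞) * c m ≤ ENNReal.ofReal (C * ((2 : ℝ)⁻¹ ^ (m + 1)) ^ (-s)) * c m :=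
          mul_le_mul_left (h _ ht) _
      _ = ENNReal.ofReal (C * 2 ^ s) * ENNReal.ofReal (2 ^ (s - σ)) ^ m := by
          rw [← ENNReal.ofReal_mul' (by positivity), ← ENNReal.ofReal_pow (by positivity),
            ← ENNReal.ofReal_mul' (by positivity), inv_two_pow_rpow, neg_neg, sub_eq_add_neg,
            Real.rpow_add two_pos, mul_pow, pow_succ]
          ring_nf
  calc ∑' i, ENNReal.ofReal (a i ^ σ) ≤ ∑' i, ∑' m, (T m).indicator (fun _ => c m) i :=
        ENNReal.tsum_le_tsum hbucket
    _ = ∑' m, ((T m).encard : ℝ≥0∞) * c m := by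
        rw [ENNReal.tsum_comm]
        simp_rw [← tsum_subtype, ENNReal.tsum_set_const]
    _ ≤ ∑' m, ENNReal.ofReal (C * 2 ^ s) * ENNReal.ofReal (2 ^ (s - σ)) ^ m :=
        ENNReal.tsum_le_tsum hlevel
    _ = _ := by rw [ENNReal.tsum_mul_left, ENNReal.tsum_geometric]

theorem exists_prod_range_le_of_eventually_le_one {f : ℕ → ℝ≥0∞} (hf : ∀ k, f k ≠ ⊤)
    (h1 : ∀ᶠ k in atTop, f k ≤ 1) : ∃ C ≠ ⊤, ∀ d, ∏ k ∈ Finset.range d, f k ≤ C := by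
  obtain ⟨K, hK⟩ := eventually_atTop.1 h1
  refine ⟨∏ k ∈ Finset.range K, max (f k) 1,
    ENNReal.prod_ne_top fun k _ => max_ne_top (hf k) ENNReal.one_ne_top, fun d => ?_⟩
  calc ∏ k ∈ Finset.range d, f k ≤ ∏ k ∈ Finset.range d, if k < K then max (f k) 1 else 1 :=
        Finset.prod_le_prod' fun k _ => by
          split_ifs with hk
          exacts [le_max_left _ _, hK k (not_lt.1 hk)]
    _ = ∏ k ∈ (Finset.range d).filter (· < K), max (f k) 1 := (Finset.prod_filter _ _).symm
    _ ≤ ∏ k ∈ Finset.range K, max (f k) 1 :=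
        Finset.prod_le_prod_of_subset_of_one_le' (fun k hk => by simp_all)
          fun _ _ _ => le_max_right _ _

theorem natCast_le_toReal_mul_rpow_neg {n : ℕ} {C : ℝ≥0∞} {ε p : ℝ} (hC : C ≠ ⊤) (hε : 0 < ε)
    (h : (n : ℝ≥0∞) * ENNReal.ofReal (ε ^ p) ≤ C) : (n : ℝ) ≤ C.toReal * ε ^ (-p) := by
  rw [← ENNReal.ofReal_natCast, ← ENNReal.ofReal_mul n.cast_nonneg,
    ENNReal.ofReal_le_iff_le_toReal hC] at h
  rw [Real.rpow_neg hε.le, ← div_eq_mul_inv, le_div_iff₀ (by positivity)]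
  exact h

theorem le_of_forall_mul_rpow_le {a b C p q : ℝ} (ha : 0 < a) (hb : 0 ≤ b) (hp : 0 ≤ p)
    (h : ∀ u : ℝ, 1 < u → a * u ^ q - b ≤ C * u ^ p) : q ≤ p := by
  by_contra! hpq
  have hlim : Tendsto (fun u : ℝ => a * u ^ (q - p)) atTop atTop :=
    (tendsto_rpow_atTop (sub_pos.2 hpq)).const_mul_atTop ha
  obtain ⟨u, hu, hu1⟩ := ((hlim.eventually_gt_atTop (C + b)).and (eventually_gt_atTop 1)).exists
  have hup : 1 ≤ u ^ p := Real.one_le_rpow hu1.le hp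
  have hq : u ^ q = u ^ (q - p) * u ^ p := by
    rw [← Real.rpow_add (by linarith), sub_add_cancel]
  have := h u hu1
  rw [hq] at this
  nlinarith

theorem tendsto_div_natCast_add_one {r : ℕ → ℕ} (hr : Monotone r) {ξ : ℝ} (hξ : 0 ≤ ξ) :
    Tendsto (fun k => ξ / ((r k : ℝ) + 1)) atTop
      (𝓝 (ENNReal.ofReal ξ / ((⨆ k, (r k : ℝ≥0∞)) + 1)).toReal) := by
  have hlim : Tendsto (fun k => (r k : ℝ≥0∞) + 1) atTop (𝓝 ((⨆ k, (r k : ℝ≥0∞)) + 1)) :=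
    (tendsto_atTop_iSup (Nat.mono_cast.comp hr)).add tendsto_const_nhds
  refine ((ENNReal.tendsto_toReal (ENNReal.div_ne_top ENNReal.ofReal_ne_top (by simp))).comp
    (ENNReal.Tendsto.const_div hlim (Or.inr ENNReal.ofReal_ne_top))).congr fun k => ?_
  rw [Function.comp_apply, ENNReal.toReal_div, ENNReal.toReal_ofReal hξ,
    ENNReal.toReal_add (by simp) ENNReal.one_ne_top]
  simp

def IsSPTBound (Λ : ℕ → ℕ → ℝ) (p : ℝ) : Prop :=
  ∃ C : ℝ, 0 ≤ C ∧ ∀ d : ℕ, 1 ≤ d → ∀ ε : ℝ, ε ∈ Set.Ioo (0 : ℝ) 1 →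
    (infoCount Λ d ε : ℝ) ≤ C * ε ^ (-p)

theorem isSPT_and_sptExponent_eq {Λ : ℕ → ℕ → ℝ} {m : ℝ} (hm : 0 ≤ m)
    (hup : ∀ p, m < p → IsSPTBound Λ p) (hlow : ∀ p, 0 ≤ p → IsSPTBound Λ p → m ≤ p) :
    IsSPT Λ ∧ sptExponent Λ = m := by
  obtain ⟨C, hC, hbound⟩ := hup (m + 1) (by linarith)
  refine ⟨⟨C, m + 1, hC, by linarith, hbound⟩, IsGLB.csInf_eq ⟨fun p hp => hlow p hp.1 hp.2,
    fun b hb => ?_⟩ ⟨m + 1, by linarith, C, hC, hbound⟩⟩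
  exact le_of_forall_gt_imp_ge_of_dense fun p hp => hb ⟨hm.trans hp.le, hup p hp⟩

/-- `eulerNode j = π(j + 1/2)` is the paper's `π(j - 1/2)` at the 1-based index `j + 1`. -/
noncomputable def eulerNode (j : ℕ) : ℝ := π * (j + 1 / 2)

theorem natCast_add_one_le_eulerNode (j : ℕ) : (j : ℝ) + 1 ≤ eulerNode j := by
  have := pi_gt_three
  unfold eulerNode
  nlinarith [(j.cast_nonneg : (0 : ℝ) ≤ j)]

theorem one_lt_eulerNode (j : ℕ) : 1 < eulerNode j := by
  have := pi_gt_three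
  unfold eulerNode
  nlinarith [(j.cast_nonneg : (0 : ℝ) ≤ j)]

theorem eulerNode_pos (j : ℕ) : 0 < eulerNode j := one_pos.trans (one_lt_eulerNode j)

theorem summable_eulerNode_rpow_neg {x : ℝ} (hx : 1 < x) :
    Summable fun j => eulerNode j ^ (-x) := by
  have h : Summable fun j : ℕ => ((j : ℝ) + 1) ^ (-x) := by
    exact_mod_cast (summable_nat_add_iff 1).2 (Real.summable_nat_rpow.2 (by linarith))
  refine h.of_nonneg_of_le (fun j => (Real.rpow_pos_of_pos (eulerNode_pos j) _).le) fun j => ?_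
  exact Real.rpow_le_rpow_of_nonpos (by positivity) (natCast_add_one_le_eulerNode j) (by linarith)

/-- The paper's `G`, taken in `ℝ≥0∞` so that it is defined (possibly `∞`) for every `x`. -/
noncomputable def eulerSum (x : ℝ) : ℝ≥0∞ := ∑' j, ENNReal.ofReal (eulerNode j ^ (-x))

theorem eulerNode_rpow_neg_lt {x y : ℝ} (hxy : x < y) (j : ℕ) :
    eulerNode j ^ (-y) < eulerNode j ^ (-x) :=
  Real.rpow_lt_rpow_of_exponent_lt (one_lt_eulerNode j) (neg_lt_neg hxy)

theorem eulerSum_antitone : Antitone eulerSum := fun _ _ hxy =>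
  ENNReal.tsum_le_tsum fun j => ENNReal.ofReal_le_ofReal <|
    Real.rpow_le_rpow_of_exponent_le (one_lt_eulerNode j).le (neg_le_neg hxy)

theorem eulerSum_eq_ofReal {x : ℝ} (hx : 1 < x) :
    eulerSum x = ENNReal.ofReal (∑' j : ℕ, (π * ((j : ℝ) + 1 / 2)) ^ (-x)) :=
  (ENNReal.ofReal_tsum_of_nonneg (fun j => (Real.rpow_pos_of_pos (eulerNode_pos j) _).le)
    (summable_eulerNode_rpow_neg hx)).symm

theorem eulerSum_ne_top {x : ℝ} (hx : 1 < x) : eulerSum x ≠ ⊤ := by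
  rw [eulerSum_eq_ofReal hx]
  exact ENNReal.ofReal_ne_top

theorem one_lt_eulerSum {x ξ : ℝ} (hξ : eulerSum ξ = 1) (hx : x < ξ) : 1 < eulerSum x := by
  have hξ_ne_top : eulerSum ξ ≠ ⊤ := hξ ▸ ENNReal.one_ne_top
  rw [← hξ]
  refine ENNReal.tsum_lt_tsum (i := 0) hξ_ne_top
    (fun j => ENNReal.ofReal_le_ofReal (eulerNode_rpow_neg_lt hx j).le) ?_
  exact (ENNReal.ofReal_lt_ofReal_iff (Real.rpow_pos_of_pos (eulerNode_pos 0) _)).2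
    (eulerNode_rpow_neg_lt hx 0)

theorem eulerAbsLam_eq_rpow (r : ℕ → ℕ) (k j : ℕ) :
    eulerAbsLam r k j = eulerNode j ^ (-(2 * r k + 2 : ℝ)) := by
  have hexp : (2 * r k + 2 : ℝ) = ((2 * r k + 2 : ℕ) : ℝ) := by push_cast; rfl
  rw [Real.rpow_neg (eulerNode_pos j).le, hexp, Real.rpow_natCast]
  rfl

theorem eulerAbsLam_pos (r : ℕ → ℕ) (k j : ℕ) : 0 < eulerAbsLam r k j := by
  rw [eulerAbsLam_eq_rpow]
  exact Real.rpow_pos_of_pos (eulerNode_pos j) _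

theorem eulerAbsLam_le_one (r : ℕ → ℕ) (k j : ℕ) : eulerAbsLam r k j ≤ 1 := by
  rw [eulerAbsLam_eq_rpow]
  exact Real.rpow_le_one_of_one_le_of_nonpos (one_lt_eulerNode j).le (neg_nonpos.2 (by positivity))

theorem tsum_ofReal_prod_eulerAbsLam_rpow (r : ℕ → ℕ) (d : ℕ) (τ : ℝ) :
    ∑' j : Fin d → ℕ, ENNReal.ofReal ((∏ k : Fin d, eulerAbsLam r k (j k)) ^ τ) =
      ∏ k : Fin d, eulerSum ((2 * r k + 2) * τ) := by
  simp only [eulerSum]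
  rw [← ENNReal.tsum_pi_prod]
  congr! with j
  rw [← Real.finsetProd_rpow _ _ fun k _ => (eulerAbsLam_pos r _ _).le,
    ENNReal.ofReal_prod_of_nonneg fun k _ => Real.rpow_nonneg (eulerAbsLam_pos r _ _).le _]
  refine Finset.prod_congr rfl fun k _ => ?_
  rw [eulerAbsLam_eq_rpow, ← Real.rpow_mul (eulerNode_pos _).le, neg_mul]

theorem encard_mul_le_prod_eulerSum (r : ℕ → ℕ) (d : ℕ) {t τ : ℝ} (ht : 0 ≤ t) (hτ : 0 ≤ τ) :
    ({j : Fin d → ℕ | t < ∏ k : Fin d, eulerAbsLam r k (j k)}.encard : ℝ≥0∞) *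
      ENNReal.ofReal (t ^ τ) ≤ ∏ k : Fin d, eulerSum ((2 * r k + 2) * τ) := by
  rw [← tsum_ofReal_prod_eulerAbsLam_rpow]
  exact Set.encard_mul_le_tsum _ fun j hj =>
    ENNReal.ofReal_le_ofReal (Real.rpow_le_rpow ht (le_of_lt hj) hτ)

theorem finite_setOf_lt_prod_eulerAbsLam (r : ℕ → ℕ) (d : ℕ) {t : ℝ} (ht : 0 < t) :
    {j : Fin d → ℕ | t < ∏ k : Fin d, eulerAbsLam r k (j k)}.Finite := by
  have hprod : ∏ k : Fin d, eulerSum ((2 * r k + 2) * 1) ≠ ⊤ :=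
    ENNReal.prod_ne_top fun k _ => eulerSum_ne_top (by linarith [(r k).cast_nonneg (α := ℝ)])
  have h := (encard_mul_le_prod_eulerSum r d ht.le zero_le_one).trans_lt hprod.lt_top
  rw [Real.rpow_one] at h
  refine Set.encard_ne_top_iff.1 fun htop => ?_
  rw [htop, ENat.toENNReal_top, ENNReal.top_mul (ENNReal.ofReal_pos.2 ht).ne'] at h
  exact lt_irrefl _ h

theorem infoCount_eulerAbsLam_eq_encard (r : ℕ → ℕ) (d : ℕ) {ε : ℝ} (hε : ε ≠ 0) :
    (infoCount (eulerAbsLam r) d ε : ℝ≥0∞) =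
      {j : Fin d → ℕ | ε ^ 2 < ∏ k : Fin d, eulerAbsLam r k (j k)}.encard := by
  rw [infoCount, Nat.card_coe_set_eq, ← ENat.toENNReal_coe,
    (finite_setOf_lt_prod_eulerAbsLam r d (by positivity)).cast_ncard_eq]

theorem isSPTBound_eulerAbsLam {r : ℕ → ℕ} {ξ p : ℝ} (hξ : eulerSum ξ ≤ 1)
    (hp : ∀ k, 1 < (r k + 1) * p) (hev : ∀ᶠ k in atTop, ξ ≤ (r k + 1) * p) :
    IsSPTBound (eulerAbsLam r) p := by
  have hp0 : 0 < p := pos_of_mul_pos_right (one_pos.trans (hp 0)) (by positivity)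
  obtain ⟨C, hC, hprod⟩ := exists_prod_range_le_of_eventually_le_one
    (f := fun k => eulerSum ((r k + 1) * p)) (fun k => eulerSum_ne_top (hp k))
    (hev.mono fun k hk => (eulerSum_antitone hk).trans hξ)
  refine ⟨C.toReal, ENNReal.toReal_nonneg, fun d _ ε hε =>
    natCast_le_toReal_mul_rpow_neg hC hε.1 ?_⟩
  have hεp : (ε ^ 2) ^ (p / 2) = ε ^ p := by
    rw [← Real.rpow_natCast_mul hε.1.le]
    ring_nf
  have hexp : ∀ k : Fin d, (2 * r k + 2 : ℝ) * (p / 2) = (r k + 1) * p := fun k => by ring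
  calc (infoCount (eulerAbsLam r) d ε : ℝ≥0∞) * ENNReal.ofReal (ε ^ p)
      ≤ ∏ k : Fin d, eulerSum ((2 * r k + 2) * (p / 2)) := by
        rw [infoCount_eulerAbsLam_eq_encard r d hε.1.ne', ← hεp]
        exact encard_mul_le_prod_eulerSum r d (sq_nonneg ε) (by positivity)
    _ ≤ C := by
        simp only [hexp]
        exact (Fin.prod_univ_eq_prod_range (fun k => eulerSum ((r k + 1) * p)) d).trans_le (hprod d)

theorem floor_le_infoCount_eulerAbsLam_one (r : ℕ → ℕ) {u : ℝ} (hu : 1 < u) :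
    ⌊u ^ (r 0 + 1 : ℝ)⁻¹ / π⌋₊ ≤ infoCount (eulerAbsLam r) 1 u⁻¹ := by
  set m := ⌊u ^ (r 0 + 1 : ℝ)⁻¹ / π⌋₊
  have hpow : (u ^ (r 0 + 1 : ℝ)⁻¹) ^ (-(2 * r 0 + 2 : ℝ)) = u⁻¹ ^ 2 := by
    rw [← Real.rpow_mul (by positivity), show (r 0 + 1 : ℝ)⁻¹ * -(2 * r 0 + 2) = -2 by
      field_simp, Real.rpow_neg (by positivity), Real.rpow_two, inv_pow]
  have hsub : Function.const (Fin 1) '' ↑(Finset.range m) ⊆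
      {j : Fin 1 → ℕ | u⁻¹ ^ 2 < ∏ k : Fin 1, eulerAbsLam r k (j k)} := by
    rintro _ ⟨n, hn, rfl⟩
    have hnm : (n : ℝ) + 1 ≤ m := by exact_mod_cast Finset.mem_range.1 hn
    have hnode : eulerNode n < u ^ (r 0 + 1 : ℝ)⁻¹ := calc
      eulerNode n < π * m := by unfold eulerNode; nlinarith [pi_pos]
      _ ≤ u ^ (r 0 + 1 : ℝ)⁻¹ := (le_div_iff₀' pi_pos).1 (Nat.floor_le (by positivity))
    simp only [Set.mem_ofPred_eq, Fin.prod_univ_one, Function.const_apply, Fin.val_zero]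
    rw [eulerAbsLam_eq_rpow, ← hpow]
    exact Real.rpow_lt_rpow_of_neg (eulerNode_pos n) hnode (neg_lt_zero.2 (by positivity))
  calc m = (Function.const (Fin 1) '' ↑(Finset.range m)).ncard := by
        rw [Set.ncard_image_of_injective _ Function.const_injective, Set.ncard_coe_finset,
          Finset.card_range]
    _ ≤ _ := Set.ncard_le_ncard hsub (finite_setOf_lt_prod_eulerAbsLam r 1 (by positivity))

theorem inv_succ_le_of_isSPTBound {r : ℕ → ℕ} {p : ℝ} (hp : 0 ≤ p)
    (h : IsSPTBound (eulerAbsLam r) p) : 1 / ((r 0 : ℝ) + 1) ≤ p := by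
  obtain ⟨C, -, hC⟩ := h
  rw [one_div]
  refine le_of_forall_mul_rpow_le (C := C) (inv_pos.2 pi_pos) zero_le_one hp fun u hu => ?_
  have hcount := hC 1 le_rfl u⁻¹ ⟨by positivity, inv_lt_one_of_one_lt₀ hu⟩
  rw [Real.inv_rpow (by positivity), ← Real.rpow_neg (by positivity), neg_neg] at hcount
  have hfloor := Nat.sub_one_lt_floor (u ^ (r 0 + 1 : ℝ)⁻¹ / π)
  have hle : (⌊u ^ (r 0 + 1 : ℝ)⁻¹ / π⌋₊ : ℝ) ≤ infoCount (eulerAbsLam r) 1 u⁻¹ := by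
    exact_mod_cast floor_le_infoCount_eulerAbsLam_one r hu
  rw [inv_mul_eq_div]
  linarith

theorem exists_encard_le_of_isSPTBound {r : ℕ → ℕ} {p : ℝ} (h : IsSPTBound (eulerAbsLam r) p) :
    ∃ C : ℝ, ∀ d : ℕ, 1 ≤ d → ∀ t ∈ Ioo (0 : ℝ) 1,
      ({j : Fin d → ℕ | t < ∏ k : Fin d, eulerAbsLam r k (j k)}.encard : ℝ≥0∞) ≤
        ENNReal.ofReal (C * t ^ (-(p / 2))) := by
  obtain ⟨C, -, hC⟩ := h
  refine ⟨C, fun d hd t ht => ?_⟩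
  have hε : √t ∈ Ioo (0 : ℝ) 1 :=
    ⟨Real.sqrt_pos.2 ht.1, (Real.sqrt_lt' one_pos).2 (by simpa using ht.2)⟩
  have hεp : √t ^ (-p) = t ^ (-(p / 2)) := by
    rw [Real.sqrt_eq_rpow, ← Real.rpow_mul ht.1.le]
    ring_nf
  have hcount := infoCount_eulerAbsLam_eq_encard r d hε.1.ne'
  rw [Real.sq_sqrt ht.1.le] at hcount
  rw [← hcount, ← hεp, ← ENNReal.ofReal_natCast]
  exact ENNReal.ofReal_le_ofReal (hC d hd _ hε)

theorem exists_prod_eulerSum_le_of_isSPTBound {r : ℕ → ℕ} {p τ : ℝ} (hp : 0 ≤ p)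
    (hτ : p / 2 < τ) (h : IsSPTBound (eulerAbsLam r) p) :
    ∃ B ≠ ⊤, ∀ d, 1 ≤ d → ∏ k : Fin d, eulerSum ((2 * r k + 2) * τ) ≤ B := by
  obtain ⟨C, hC⟩ := exists_encard_le_of_isSPTBound h
  have hρ : ENNReal.ofReal (2 ^ (p / 2 - τ)) < 1 := by
    rw [ENNReal.ofReal_lt_one]
    exact Real.rpow_lt_one_of_one_lt_of_neg one_lt_two (by linarith)
  refine ⟨ENNReal.ofReal (C * 2 ^ (p / 2)) * (1 - ENNReal.ofReal (2 ^ (p / 2 - τ)))⁻¹,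
    ENNReal.mul_ne_top ENNReal.ofReal_ne_top
    (ENNReal.inv_ne_top.2 (tsub_pos_iff_lt.2 hρ).ne'), fun d hd => ?_⟩
  rw [← tsum_ofReal_prod_eulerAbsLam_rpow]
  exact tsum_ofReal_rpow_le_of_encard_le
    (fun j => ⟨Finset.prod_pos fun k _ => eulerAbsLam_pos r _ _,
      Finset.prod_le_one (fun k _ => (eulerAbsLam_pos r _ _).le)
        fun k _ => eulerAbsLam_le_one r _ _⟩)
    (by positivity) hτ (hC d hd)

theorem div_le_of_isSPTBound {r : ℕ → ℕ} {ξ R p : ℝ} (hξ1 : 1 < ξ) (hξ : eulerSum ξ = 1)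
    (hR : ∀ k, (r k : ℝ) ≤ R) (hp : 0 ≤ p) (h : IsSPTBound (eulerAbsLam r) p) :
    ξ / (R + 1) ≤ p := by
  have hR1 : 0 < R + 1 := by linarith [hR 0, (r 0).cast_nonneg (α := ℝ)]
  by_contra! hlt
  rw [lt_div_iff₀ hR1] at hlt
  obtain ⟨x, hx⟩ := exists_between (max_lt hξ1 hlt)
  obtain ⟨B, hB, hbound⟩ := exists_prod_eulerSum_le_of_isSPTBound (τ := x / (2 * R + 2)) hp
    (by rw [lt_div_iff₀ (by linarith)]; nlinarith [max_lt_iff.1 hx.1]) h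
  have hpow : ∀ d, eulerSum x ^ d ≤ ∏ k : Fin d, eulerSum ((2 * r k + 2) * (x / (2 * R + 2))) :=
    fun d => by
      rw [← Fin.prod_const]
      refine Finset.prod_le_prod' fun k _ => eulerSum_antitone ?_
      rw [mul_div_assoc', div_le_iff₀ (by linarith)]
      nlinarith [hR k, max_lt_iff.1 hx.1]
  have hlim := ENNReal.tendsto_pow_atTop_nhds_top_iff.2 (one_lt_eulerSum hξ hx.2)
  obtain ⟨d, hd, hd1⟩ :=
    ((hlim.eventually (lt_mem_nhds hB.lt_top)).and (eventually_ge_atTop 1)).exists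
  exact (hd.trans_le ((hpow d).trans (hbound d hd1))).false

/-- Euler kernels, absolute error criterion: SPT holds for every nondecreasing `(r_k)`, and
the exponent of SPT is `max{ξ₀/(r̄+1), 1/(r₁+1)}` where `r̄ = lim r_k ∈ [0,∞]` (here the
limsup in `ℝ≥0∞`, so that `ξ₀/(r̄+1) = 0` when `r̄ = ∞`) and `ξ₀` is the unique number in
`(1,2)` with `∑_{j≥1} (π(j-1/2))^{-ξ₀} = 1`. -/
theorem euler_abs_spt (r : ℕ → ℕ) (hr : Monotone r)
    (ξ₀ : ℝ) (hξ : ξ₀ ∈ Set.Ioo (1 : ℝ) 2)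
    (hG : (∑' j : ℕ, (Real.pi * ((j : ℝ) + 1 / 2)) ^ (-ξ₀)) = 1) :
    IsSPT (eulerAbsLam r) ∧
      sptExponent (eulerAbsLam r) =
        max ((ENNReal.ofReal ξ₀ /
            (Filter.limsup (fun k : ℕ => (r k : ENNReal)) Filter.atTop + 1)).toReal)
          (1 / ((r 0 : ℝ) + 1)) := by
  have hG1 : eulerSum ξ₀ = 1 := by rw [eulerSum_eq_ofReal hξ.1, hG, ENNReal.ofReal_one]
  have hrL : Monotone fun k => (r k : ℝ≥0∞) := fun _ _ h => Nat.cast_le.2 (hr h)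
  rw [(tendsto_atTop_iSup hrL).limsup_eq]
  set L := ⨆ k, (r k : ℝ≥0∞)
  refine isSPT_and_sptExponent_eq (le_max_of_le_right (by positivity)) (fun p hp => ?_)
    fun p hp0 hp => max_le ?_ (inv_succ_le_of_isSPTBound hp0 hp)
  · obtain ⟨hpL, hp0⟩ := max_lt_iff.1 hp
    refine isSPTBound_eulerAbsLam hG1.le (fun k => ?_) ?_
    · rw [div_lt_iff₀ (by positivity)] at hp0
      nlinarith [(Nat.cast_le.2 (hr k.zero_le) : (r 0 : ℝ) ≤ r k)]
    · filter_upwards [(tendsto_div_natCast_add_one hr (by linarith [hξ.1])).eventually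
        (gt_mem_nhds hpL)] with k hk
      rw [div_lt_iff₀ (by positivity)] at hk
      linarith
  · rcases eq_or_ne L ⊤ with hLtop | hLtop
    · rw [hLtop, top_add, ENNReal.div_top, ENNReal.toReal_zero]
      exact hp0
    · have hrR : ∀ k, (r k : ℝ) ≤ L.toReal := fun k =>
        (ENNReal.toReal_mono hLtop (le_iSup (fun k => (r k : ℝ≥0∞)) k)).trans_eq' (by simp)
      rw [ENNReal.toReal_div, ENNReal.toReal_ofReal (by linarith [hξ.1]),
        ENNReal.toReal_add hLtop ENNReal.one_ne_top, ENNReal.toReal_one]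
      exact div_le_of_isSPTBound hξ.1 hG1 hrR hp0 hp
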